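/- arXiv:1403.4491 — 6 statements merged into one kernel-verified Lean document; each statement's English description precedes it below -/
import Mathlib

section
/- Let 0 ≤ p ≤ 1, q ∈ ℝ, 0 ≤ Δ₂ ≤ Δ₁ ≤ t, Δ > 0, and define J_{p,q}(Δ₁, Δ₂, Δ) = ∫_{t-Δ₁}^{t-Δ₂} (t-s)^q · min(1, Δ/(t-s))^p ds. If q > p - 1, then J_{p,q}(Δ₁, Δ₂, Δ) ≤ (2/(q+1-p)) · (min(Δ, Δ₁))^p · Δ₁^{q+1-p}. -/
/-!
For `0 < u ≤ Δ₁` the integrand, after substituting `u = t - s`, equals `(min u Δ) ^ p * u ^ (q - p)`,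
which is at most `(min Δ Δ₁) ^ p * u ^ (q - p)` since `p ≥ 0`. As `q - p > -1`, the power
`u ^ (q - p)` is integrable at `0` and `∫ u in Δ₂..Δ₁, u ^ (q - p) ≤ Δ₁ ^ (q + 1 - p) / (q + 1 - p)`.
-/

open Real intervalIntegral MeasureTheory Set

lemma intervalIntegral.integral_mono_of_nonneg_on {f g : ℝ → ℝ} {a b : ℝ} (hab : a ≤ b)
    (hg : IntervalIntegrable g volume a b) (hf : ∀ x ∈ Ioc a b, 0 ≤ f x)
    (hfg : ∀ x ∈ Ioc a b, f x ≤ g x) :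
    ∫ x in a..b, f x ≤ ∫ x in a..b, g x := by
  rw [integral_of_le hab, integral_of_le hab]
  exact integral_mono_of_nonneg ((ae_restrict_mem measurableSet_Ioc).mono hf) hg.1
    ((ae_restrict_mem measurableSet_Ioc).mono hfg)

lemma rpow_mul_min_one_div_rpow_eq {u Δ : ℝ} (hu : 0 < u) (hΔ : 0 ≤ Δ) (p q : ℝ) :
    u ^ q * (min 1 (Δ / u)) ^ p = (min u Δ) ^ p * u ^ (q - p) := by
  have hmin : min 1 (Δ / u) = min u Δ / u := by
    rw [← min_div_div_right hu.le, div_self hu.ne']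
  rw [hmin, div_rpow (le_min hu.le hΔ) hu.le, rpow_sub hu]
  ring

lemma rpow_mul_min_one_div_rpow_le {p u Δ D : ℝ} (hp : 0 ≤ p) (hu : 0 < u) (hΔ : 0 ≤ Δ)
    (huD : u ≤ D) (q : ℝ) :
    u ^ q * (min 1 (Δ / u)) ^ p ≤ (min Δ D) ^ p * u ^ (q - p) := by
  rw [rpow_mul_min_one_div_rpow_eq hu hΔ, min_comm u]
  gcongr

lemma integral_rpow_le_rpow_add_one_div {a b s : ℝ} (ha : 0 ≤ a) (hs : -1 < s) :
    ∫ u in a..b, u ^ s ≤ b ^ (s + 1) / (s + 1) := by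
  rw [integral_rpow (Or.inl hs)]
  gcongr
  · linarith
  · exact sub_le_self _ (rpow_nonneg ha _)

theorem J_bound_case_a_general (p q t Δ₁ Δ₂ Δ : ℝ)
    (hp0 : 0 ≤ p)
    (h20 : 0 ≤ Δ₂) (h21 : Δ₂ ≤ Δ₁) (hΔ : 0 < Δ)
    (hq : p - 1 < q) :
    (∫ s in (t - Δ₁)..(t - Δ₂), (t - s) ^ q * (min 1 (Δ / (t - s))) ^ p) ≤
      2 / (q + 1 - p) * (min Δ Δ₁) ^ p * Δ₁ ^ (q + 1 - p) := by
  have hs : -1 < q - p := by linarith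
  have hC : 0 ≤ (min Δ Δ₁) ^ p := rpow_nonneg (le_min hΔ.le (h20.trans h21)) p
  rw [integral_comp_sub_left (fun u => u ^ q * (min 1 (Δ / u)) ^ p) t, sub_sub_cancel,
    sub_sub_cancel]
  calc ∫ u in Δ₂..Δ₁, u ^ q * (min 1 (Δ / u)) ^ p
      ≤ ∫ u in Δ₂..Δ₁, (min Δ Δ₁) ^ p * u ^ (q - p) := by
        refine integral_mono_of_nonneg_on h21 ((intervalIntegrable_rpow' hs).const_mul _)
          (fun u hu => ?_) fun u hu => ?_
        · have hu0 : 0 < u := h20.trans_lt hu.1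
          exact mul_nonneg (rpow_nonneg hu0.le _)
            (rpow_nonneg (le_min zero_le_one (div_nonneg hΔ.le hu0.le)) _)
        · exact rpow_mul_min_one_div_rpow_le hp0 (h20.trans_lt hu.1) hΔ.le hu.2 q
    _ = (min Δ Δ₁) ^ p * ∫ u in Δ₂..Δ₁, u ^ (q - p) := integral_const_mul _ _
    _ ≤ (min Δ Δ₁) ^ p * (Δ₁ ^ (q + 1 - p) / (q + 1 - p)) := by
        rw [show q + 1 - p = q - p + 1 by ring]
        gcongr
        exact integral_rpow_le_rpow_add_one_div h20 hs
    _ ≤ 2 / (q + 1 - p) * (min Δ Δ₁) ^ p * Δ₁ ^ (q + 1 - p) := by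
        have hB : 0 ≤ Δ₁ ^ (q + 1 - p) := rpow_nonneg (h20.trans h21) _
        rw [mul_div_assoc', div_mul_eq_mul_div, div_mul_eq_mul_div,
          div_le_div_iff_of_pos_right (by linarith)]
        linarith [mul_nonneg hC hB]

/-- Lemma 4.1(a): bound on J_{p,q}(Δ₁,Δ₂,Δ) when q > p - 1. -/
theorem J_bound_case_a (p q t Δ₁ Δ₂ Δ : ℝ)
    (hp0 : 0 ≤ p) (hp1 : p ≤ 1)
    (h20 : 0 ≤ Δ₂) (h21 : Δ₂ ≤ Δ₁) (h1t : Δ₁ ≤ t) (hΔ : 0 < Δ)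
    (hq : p - 1 < q) :
    (∫ s in (t - Δ₁)..(t - Δ₂), (t - s) ^ q * (min 1 (Δ / (t - s))) ^ p) ≤
      2 / (q + 1 - p) * (min Δ Δ₁) ^ p * Δ₁ ^ (q + 1 - p) :=
  J_bound_case_a_general p q t Δ₁ Δ₂ Δ hp0 h20 h21 hΔ hq
end

section
/- Let 0 ≤ p ≤ 1, -1 < q < p - 1, 0 ≤ Δ₂ ≤ Δ₁ ≤ t, Δ > 0. Then J_{p,q}(Δ₁, Δ₂, Δ) = ∫_{t-Δ₁}^{t-Δ₂} (t-s)^q min(1, Δ/(t-s))^p ds ≤ ((p-1-q)^{-1} + (q+1)^{-1}) · Δ^p · (max(Δ, Δ₂))^{q-p+1}. -/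
/-!
After the substitution `u = t - s` the integral runs over `[Δ₂, Δ₁]` against the kernel
`u ^ q * min 1 (Δ / u) ^ p`, which is `u ^ q` for `u ≤ Δ` and `Δ ^ p * u ^ (q - p)` beyond.
Since the kernel is nonnegative we may enlarge the interval so that it contains `M = max Δ Δ₂`
and split it there. Below `M` the interval is empty unless `M = Δ`, and then `u ^ q` integrates
to at most `Δ ^ (q + 1) / (q + 1)`; above `M` the decaying tail `Δ ^ p * u ^ (q - p)`
integrates to at most `Δ ^ p * M ^ (q - p + 1) / (p - 1 - q)`.
-/

open Real intervalIntegral MeasureTheory Set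

noncomputable section

def cutoffKernel (p q Δ u : ℝ) : ℝ := u ^ q * min 1 (Δ / u) ^ p

namespace cutoffKernel

variable {p q Δ u a b : ℝ}

lemma nonneg (hΔ : 0 ≤ Δ) (hu : 0 ≤ u) : 0 ≤ cutoffKernel p q Δ u :=
  mul_nonneg (rpow_nonneg hu _) (rpow_nonneg (le_min zero_le_one (div_nonneg hΔ hu)) _)

lemma le_rpow (hp : 0 ≤ p) (hΔ : 0 ≤ Δ) (hu : 0 ≤ u) : cutoffKernel p q Δ u ≤ u ^ q :=
  mul_le_of_le_one_right (rpow_nonneg hu _)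
    (rpow_le_one (le_min zero_le_one (div_nonneg hΔ hu)) (min_le_left _ _) hp)

lemma le_mul_rpow_sub (hp : 0 ≤ p) (hΔ : 0 ≤ Δ) (hu : 0 < u) :
    cutoffKernel p q Δ u ≤ Δ ^ p * u ^ (q - p) :=
  calc cutoffKernel p q Δ u ≤ u ^ q * (Δ / u) ^ p :=
        mul_le_mul_of_nonneg_left (rpow_le_rpow (le_min zero_le_one (div_nonneg hΔ hu.le))
          (min_le_right _ _) hp) (rpow_nonneg hu.le _)
    _ = Δ ^ p * u ^ (q - p) := by rw [div_rpow hΔ hu.le, rpow_sub hu]; ring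

lemma continuousAt (hp : 0 ≤ p) (hu : u ≠ 0) : ContinuousAt (cutoffKernel p q Δ) u := by
  unfold cutoffKernel
  fun_prop (disch := first | exact hu | exact Or.inl hu | exact Or.inr hp)

lemma intervalIntegrable (hq : -1 < q) (hp : 0 ≤ p) (hΔ : 0 ≤ Δ) (ha : 0 ≤ a) (hb : 0 ≤ b) :
    IntervalIntegrable (cutoffKernel p q Δ) volume a b := by
  refine (intervalIntegrable_rpow' hq).mono_fun
    (by unfold cutoffKernel; fun_prop) (ae_restrict_of_forall_mem measurableSet_uIoc ?_)
  intro u hu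
  have hu0 : 0 ≤ u := (le_min ha hb).trans hu.1.le
  simp only [norm_of_nonneg (nonneg hΔ hu0), norm_of_nonneg (rpow_nonneg hu0 q)]
  exact le_rpow hp hΔ hu0

lemma integral_le_rpow_add_one (hq : -1 < q) (hp : 0 ≤ p) (hΔ : 0 ≤ Δ) (ha : 0 ≤ a)
    (hab : a ≤ b) :
    ∫ u in a..b, cutoffKernel p q Δ u ≤ b ^ (q + 1) / (q + 1) := by
  have hq' : 0 < q + 1 := by linarith
  calc ∫ u in a..b, cutoffKernel p q Δ u ≤ ∫ u in a..b, u ^ q :=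
        integral_mono_on hab (intervalIntegrable hq hp hΔ ha (ha.trans hab))
          (intervalIntegrable_rpow' hq) fun u hu => le_rpow hp hΔ (ha.trans hu.1)
    _ = (b ^ (q + 1) - a ^ (q + 1)) / (q + 1) := integral_rpow (Or.inl hq)
    _ ≤ b ^ (q + 1) / (q + 1) := by gcongr; exact sub_le_self _ (rpow_nonneg ha _)

lemma integral_le_tail (hq : q < p - 1) (hp : 0 ≤ p) (hΔ : 0 ≤ Δ) (ha : 0 < a)
    (hab : a ≤ b) :
    ∫ u in a..b, cutoffKernel p q Δ u ≤ Δ ^ p * a ^ (q - p + 1) / (p - 1 - q) := by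
  have hr : q - p + 1 < 0 := by linarith
  have hzero : (0 : ℝ) ∉ uIcc a b := by rw [uIcc_of_le hab]; exact fun h => ha.not_ge h.1
  have hne : ∀ u ∈ uIcc a b, u ≠ 0 := fun u hu => ne_of_mem_of_not_mem hu hzero
  have htail : IntervalIntegrable (fun u => Δ ^ p * u ^ (q - p)) volume a b :=
    (continuousOn_const.mul (continuousOn_id.rpow_const fun u hu =>
      Or.inl (hne u hu))).intervalIntegrable
  have hkernel : IntervalIntegrable (cutoffKernel p q Δ) volume a b :=
    ContinuousOn.intervalIntegrable fun u hu => (continuousAt hp (hne u hu)).continuousWithinAt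
  calc ∫ u in a..b, cutoffKernel p q Δ u ≤ ∫ u in a..b, Δ ^ p * u ^ (q - p) :=
        integral_mono_on hab hkernel htail fun u hu => le_mul_rpow_sub hp hΔ (ha.trans_le hu.1)
    _ = Δ ^ p * ((a ^ (q - p + 1) - b ^ (q - p + 1)) / (p - 1 - q)) := by
        rw [intervalIntegral.integral_const_mul, integral_rpow (Or.inr ⟨by linarith, hzero⟩)]
        congr 1
        rw [div_eq_div_iff hr.ne (by linarith)]
        ring
    _ ≤ Δ ^ p * (a ^ (q - p + 1) / (p - 1 - q)) := by
        have : 0 < p - 1 - q := by linarith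
        gcongr
        exact sub_le_self _ (rpow_nonneg (ha.le.trans hab) _)
    _ = Δ ^ p * a ^ (q - p + 1) / (p - 1 - q) := by ring

lemma integral_le_head (hq : -1 < q) (hp : 0 ≤ p) (hΔ : 0 < Δ) (ha : 0 ≤ a) :
    ∫ u in a..max Δ a, cutoffKernel p q Δ u ≤ Δ ^ p * (max Δ a) ^ (q - p + 1) / (q + 1) := by
  have hq' : 0 < q + 1 := by linarith
  rcases le_total a Δ with h | h
  · rw [max_eq_left h, ← rpow_add hΔ, show p + (q - p + 1) = q + 1 by ring]
    exact integral_le_rpow_add_one hq hp hΔ.le ha h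
  · rw [max_eq_right h, integral_same]
    positivity

end cutoffKernel

lemma integral_rpow_mul_min_eq_integral_cutoffKernel (p q t Δ₁ Δ₂ Δ : ℝ) :
    (∫ s in (t - Δ₁)..(t - Δ₂), (t - s) ^ q * (min 1 (Δ / (t - s))) ^ p) =
      ∫ u in Δ₂..Δ₁, cutoffKernel p q Δ u := by
  change (∫ s in (t - Δ₁)..(t - Δ₂), cutoffKernel p q Δ (t - s)) = _
  rw [integral_comp_sub_left, sub_sub_cancel, sub_sub_cancel]

end

theorem J_bound_case_b_general (p q t Δ₁ Δ₂ Δ : ℝ)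
    (hp0 : 0 ≤ p)
    (h20 : 0 ≤ Δ₂) (h21 : Δ₂ ≤ Δ₁) (hΔ : 0 < Δ)
    (hq1 : -1 < q) (hq2 : q < p - 1) :
    (∫ s in (t - Δ₁)..(t - Δ₂), (t - s) ^ q * (min 1 (Δ / (t - s))) ^ p) ≤
      ((p - 1 - q)⁻¹ + (q + 1)⁻¹) * Δ ^ p * (max Δ Δ₂) ^ (q - p + 1) := by
  rw [integral_rpow_mul_min_eq_integral_cutoffKernel]
  set M := max Δ Δ₂
  set B := max Δ₁ M
  have hM : 0 < M := hΔ.trans_le (le_max_left _ _)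
  have hΔ₂M : Δ₂ ≤ M := le_max_right _ _
  have hint : ∀ {a b}, 0 ≤ a → 0 ≤ b → IntervalIntegrable (cutoffKernel p q Δ) volume a b :=
    fun ha hb => cutoffKernel.intervalIntegrable hq1 hp0 hΔ.le ha hb
  calc ∫ u in Δ₂..Δ₁, cutoffKernel p q Δ u ≤ ∫ u in Δ₂..B, cutoffKernel p q Δ u :=
        integral_mono_interval le_rfl h21 (le_max_left _ _)
          (ae_restrict_of_forall_mem measurableSet_Ioc fun u hu =>
            cutoffKernel.nonneg hΔ.le (h20.trans hu.1.le))
          (hint h20 (hM.le.trans (le_max_right _ _)))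
    _ = (∫ u in Δ₂..M, cutoffKernel p q Δ u) + ∫ u in M..B, cutoffKernel p q Δ u :=
        (integral_add_adjacent_intervals (hint h20 hM.le)
          (hint hM.le (hM.le.trans (le_max_right _ _)))).symm
    _ ≤ Δ ^ p * M ^ (q - p + 1) / (q + 1) + Δ ^ p * M ^ (q - p + 1) / (p - 1 - q) :=
        add_le_add (cutoffKernel.integral_le_head hq1 hp0 hΔ h20)
          (cutoffKernel.integral_le_tail hq2 hp0 hΔ.le hM (le_max_right _ _))
    _ = ((p - 1 - q)⁻¹ + (q + 1)⁻¹) * Δ ^ p * M ^ (q - p + 1) := by ring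

/-- Lemma 4.1(b): bound on J_{p,q}(Δ₁,Δ₂,Δ) when -1 < q < p - 1. -/
theorem J_bound_case_b (p q t Δ₁ Δ₂ Δ : ℝ)
    (hp0 : 0 ≤ p) (hp1 : p ≤ 1)
    (h20 : 0 ≤ Δ₂) (h21 : Δ₂ ≤ Δ₁) (h1t : Δ₁ ≤ t) (hΔ : 0 < Δ)
    (hq1 : -1 < q) (hq2 : q < p - 1) :
    (∫ s in (t - Δ₁)..(t - Δ₂), (t - s) ^ q * (min 1 (Δ / (t - s))) ^ p) ≤
      ((p - 1 - q)⁻¹ + (q + 1)⁻¹) * Δ ^ p * (max Δ Δ₂) ^ (q - p + 1) :=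
  J_bound_case_b_general p q t Δ₁ Δ₂ Δ hp0 h20 h21 hΔ hq1 hq2
end

section
/- Let 0 ≤ p ≤ 1, q < -1, 0 < Δ₂ ≤ Δ₁ ≤ t, Δ > 0. Then J_{p,q}(Δ₁, Δ₂, Δ) = ∫_{t-Δ₁}^{t-Δ₂} (t-s)^q min(1, Δ/(t-s))^p ds ≤ 2|q+1|^{-1} · (min(Δ, Δ₂))^p · Δ₂^{q+1-p}. -/
/-!
Substituting `u = t - s` turns the integral into `∫ u in Δ₂..Δ₁, u ^ q * (min 1 (Δ / u)) ^ p`.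
For `u ≥ Δ₂` the truncated factor is at most `min Δ Δ₂ / Δ₂`, and since `q < -1` the remaining
integral of `u ^ q` is at most its tail `Δ₂ ^ (q + 1) / |q + 1|`; this gives the bound even
without the factor `2`.
-/

open Real intervalIntegral

theorem integral_rpow_le_of_lt_neg_one {q a b : ℝ} (hq : q < -1) (ha : 0 < a) (hab : a ≤ b) :
    ∫ u in a..b, u ^ q ≤ |q + 1|⁻¹ * a ^ (q + 1) := by
  have hq1 : q + 1 < 0 := by linarith
  rw [integral_rpow (Or.inr ⟨hq.ne, Set.notMem_uIcc_of_lt ha (ha.trans_le hab)⟩),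
    abs_of_neg hq1, ← neg_div_neg_eq, neg_sub, inv_mul_eq_div]
  exact div_le_div_of_nonneg_right (sub_le_self _ (rpow_nonneg (ha.le.trans hab) _))
    (neg_nonneg.mpr hq1.le)

theorem min_one_div_le_min_div {Δ a u : ℝ} (hΔ : 0 ≤ Δ) (ha : 0 < a) (hau : a ≤ u) :
    min 1 (Δ / u) ≤ min Δ a / a := by
  rcases le_total a Δ with h | h
  · rw [min_eq_right h, div_self ha.ne']
    exact min_le_left _ _
  · rw [min_eq_left h]
    exact (min_le_right _ _).trans (div_le_div_of_nonneg_left hΔ ha hau)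

theorem continuousOn_rpow_mul_min_one_div_rpow {p q Δ a b : ℝ} (hp : 0 ≤ p) (ha : 0 < a) :
    ContinuousOn (fun u : ℝ ↦ u ^ q * (min 1 (Δ / u)) ^ p) (Set.Icc a b) := by
  have hne : ∀ u ∈ Set.Icc a b, u ≠ 0 := fun u hu ↦ (ha.trans_le hu.1).ne'
  exact (continuousOn_id.rpow_const fun u hu ↦ Or.inl (hne u hu)).mul
    ((continuousOn_const.inf (continuousOn_const.div continuousOn_id hne)).rpow_const
      fun _ _ ↦ Or.inr hp)

theorem integral_rpow_mul_min_one_div_rpow_le {p q Δ a b : ℝ} (hp : 0 ≤ p) (hq : q < -1)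
    (hΔ : 0 < Δ) (ha : 0 < a) (hab : a ≤ b) :
    ∫ u in a..b, u ^ q * (min 1 (Δ / u)) ^ p ≤ |q + 1|⁻¹ * (min Δ a) ^ p * a ^ (q + 1 - p) := by
  have hmin : 0 ≤ min Δ a := le_min hΔ.le ha.le
  have hpointwise : ∀ u ∈ Set.Icc a b,
      u ^ q * (min 1 (Δ / u)) ^ p ≤ (min Δ a / a) ^ p * u ^ q := by
    intro u hu
    have hu0 : 0 < u := ha.trans_le hu.1
    rw [mul_comm _ (u ^ q)]
    gcongr
    exact min_one_div_le_min_div hΔ.le ha hu.1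
  have hint : IntervalIntegrable (fun u : ℝ ↦ u ^ q) MeasureTheory.volume a b :=
    intervalIntegrable_rpow (Or.inr (Set.notMem_uIcc_of_lt ha (ha.trans_le hab)))
  calc ∫ u in a..b, u ^ q * (min 1 (Δ / u)) ^ p
      ≤ ∫ u in a..b, (min Δ a / a) ^ p * u ^ q := by
        refine integral_mono_on hab ?_ (hint.const_mul _) hpointwise
        exact (continuousOn_rpow_mul_min_one_div_rpow hp ha).intervalIntegrable_of_Icc hab
    _ ≤ (min Δ a / a) ^ p * (|q + 1|⁻¹ * a ^ (q + 1)) := by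
        rw [integral_const_mul]
        gcongr
        exact integral_rpow_le_of_lt_neg_one hq ha hab
    _ = |q + 1|⁻¹ * (min Δ a) ^ p * a ^ (q + 1 - p) := by
        rw [div_rpow hmin ha.le, rpow_sub ha]
        ring

theorem J_bound_case_c_general (p q t Δ₁ Δ₂ Δ : ℝ)
    (hp0 : 0 ≤ p)
    (h20 : 0 < Δ₂) (h21 : Δ₂ ≤ Δ₁) (hΔ : 0 < Δ)
    (hq : q < -1) :
    (∫ s in (t - Δ₁)..(t - Δ₂), (t - s) ^ q * (min 1 (Δ / (t - s))) ^ p) ≤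
      2 * |q + 1|⁻¹ * (min Δ Δ₂) ^ p * Δ₂ ^ (q + 1 - p) := by
  rw [integral_comp_sub_left (fun u ↦ u ^ q * (min 1 (Δ / u)) ^ p), sub_sub_cancel,
    sub_sub_cancel]
  refine (integral_rpow_mul_min_one_div_rpow_le hp0 hq hΔ h20 h21).trans ?_
  have hbound : 0 ≤ |q + 1|⁻¹ * (min Δ Δ₂) ^ p * Δ₂ ^ (q + 1 - p) := by
    have := le_min hΔ.le h20.le
    positivity
  linarith

/-- Lemma 4.1(c): bound on J_{p,q}(Δ₁,Δ₂,Δ) when q < -1. -/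
theorem J_bound_case_c (p q t Δ₁ Δ₂ Δ : ℝ)
    (hp0 : 0 ≤ p) (hp1 : p ≤ 1)
    (h20 : 0 < Δ₂) (h21 : Δ₂ ≤ Δ₁) (h1t : Δ₁ ≤ t) (hΔ : 0 < Δ)
    (hq : q < -1) :
    (∫ s in (t - Δ₁)..(t - Δ₂), (t - s) ^ q * (min 1 (Δ / (t - s))) ^ p) ≤
      2 * |q + 1|⁻¹ * (min Δ Δ₂) ^ p * Δ₂ ^ (q + 1 - p) :=
  J_bound_case_c_general p q t Δ₁ Δ₂ Δ hp0 h20 h21 hΔ hq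
end

section
/- For all t, t' > 0 with t ≤ t' and all w ∈ ℝ, |G_t(w) - G_{t'}(w)| ≤ C · t^{-1} · |t - t'| · (G_t(w) + G_{2t'}(w)) for a universal constant C > 0, where G_t is the one-dimensional heat kernel. -/
open Real

/-- One-dimensional Gaussian heat kernel. -/
noncomputable def G (t x : ℝ) : ℝ := (2 * Real.pi * t) ^ (-(1/2) : ℝ) * Real.exp (-x ^ 2 / (2 * t))

/-!
For `t ≤ t' ≤ 2t` we apply the mean value theorem in time. Writing `y = x² / (2s)`, the time
derivative is `∂ₛ G s x = s⁻¹ (y - 1/2) G s x`, and the polynomial factor `y` is absorbed by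
widening the Gaussian, `y e^{-y} ≤ e^{-y/2}`, which turns `G s` into (a multiple of) `G (2s)`.
Since `√s · G s x` is increasing in `s`, every `G (2s)` with `t ≤ s ≤ t'` is at most `2 G (2t')`.
For `t' > 2t` the increment `|t - t'| / t` exceeds `1` and the triangle inequality suffices.
-/

lemma G_pos {t : ℝ} (ht : 0 < t) (x : ℝ) : 0 < G t x :=
  mul_pos (rpow_pos_of_pos (by positivity) _) (exp_pos _)

lemma sqrt_mul_G {t : ℝ} (ht : 0 < t) (x : ℝ) :
    √t * G t x = exp (-x ^ 2 / (2 * t)) / √(2 * π) := by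
  have hpref : (2 * π * t) ^ (-(1/2) : ℝ) = (√(2 * π) * √t)⁻¹ := by
    rw [rpow_neg (by positivity), ← sqrt_eq_rpow, sqrt_mul (by positivity)]
  have : 0 < √t := sqrt_pos.2 ht
  rw [G, hpref]
  field_simp

lemma sqrt_mul_G_le_sqrt_mul_G {s u : ℝ} (hs : 0 < s) (hsu : s ≤ u) (x : ℝ) :
    √s * G s x ≤ √u * G u x := by
  rw [sqrt_mul_G hs, sqrt_mul_G (hs.trans_le hsu)]
  refine div_le_div_of_nonneg_right (exp_le_exp.2 ?_) (sqrt_nonneg _)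
  rw [neg_div, neg_div, neg_le_neg_iff]
  exact div_le_div_of_nonneg_left (sq_nonneg x) (by positivity) (by linarith)

lemma G_le_two_mul_G {s u : ℝ} (hs : 0 < s) (hsu : s ≤ u) (hu : u ≤ 4 * s) (x : ℝ) :
    G s x ≤ 2 * G u x := by
  have hsqrt : √u ≤ 2 * √s := by
    calc √u ≤ √(2 ^ 2 * s) := sqrt_le_sqrt (by linarith)
      _ = 2 * √s := by rw [sqrt_mul (by positivity), sqrt_sq (by norm_num)]
  refine le_of_mul_le_mul_left ?_ (sqrt_pos.2 hs)
  calc √s * G s x ≤ √u * G u x := sqrt_mul_G_le_sqrt_mul_G hs hsu x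
    _ ≤ 2 * √s * G u x := by gcongr; exact (G_pos (hs.trans_le hsu) x).le
    _ = √s * (2 * G u x) := by ring

lemma mul_exp_neg_le_exp_neg_half {y : ℝ} (hy : 0 ≤ y) : y * exp (-y) ≤ exp (-(y / 2)) := by
  have hy_le : y ≤ exp (y / 2) := by
    have h := add_one_le_exp (y / 4)
    have hsq : exp (y / 4) ^ 2 = exp (y / 2) := by rw [← exp_nat_mul]; ring_nf
    nlinarith [sq_nonneg (y / 4 - 1)]
  calc y * exp (-y) ≤ exp (y / 2) * exp (-y) := by gcongr
    _ = exp (-(y / 2)) := by rw [← exp_add]; ring_nf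

lemma G_mul_sq_div_le {s : ℝ} (hs : 0 < s) (x : ℝ) :
    G s x * (x ^ 2 / (2 * s)) ≤ 2 * G (2 * s) x := by
  set y := x ^ 2 / (2 * s) with hy
  have hsqrt : √(2 * s) ≤ 2 * √s := by
    rw [sqrt_mul zero_le_two]
    gcongr
    rw [sqrt_le_left zero_le_two]
    norm_num
  refine le_of_mul_le_mul_left ?_ (sqrt_pos.2 hs)
  calc √s * (G s x * y) = y * exp (-y) / √(2 * π) := by
        rw [← mul_assoc, sqrt_mul_G hs, hy]; ring_nf
    _ ≤ exp (-(y / 2)) / √(2 * π) := by gcongr; exact mul_exp_neg_le_exp_neg_half (by positivity)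
    _ = √(2 * s) * G (2 * s) x := by rw [sqrt_mul_G (by positivity), hy]; ring_nf
    _ ≤ 2 * √s * G (2 * s) x := by gcongr; exact (G_pos (by positivity) x).le
    _ = √s * (2 * G (2 * s) x) := by ring

lemma hasDerivAt_G_time (x : ℝ) {s : ℝ} (hs : 0 < s) :
    HasDerivAt (fun s => G s x) (G s x * (x ^ 2 / (2 * s ^ 2) - 1 / (2 * s))) s := by
  have hbase : 0 < 2 * π * s := by positivity
  have hpref := ((hasDerivAt_id s).const_mul (2 * π)).rpow_const (p := -(1/2)) (Or.inl hbase.ne')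
  have hexp :=
    ((hasDerivAt_const s (-x ^ 2)).div ((hasDerivAt_id s).const_mul 2) (by positivity)).exp
  refine (hpref.mul hexp).congr_deriv ?_
  simp only [G, id, Pi.div_apply]
  rw [show (-(1/2) : ℝ) - 1 = -(1/2) + -1 by norm_num, rpow_add hbase, rpow_neg_one]
  field_simp
  ring

lemma abs_deriv_G_time_le {s : ℝ} (hs : 0 < s) (x : ℝ) :
    |G s x * (x ^ 2 / (2 * s ^ 2) - 1 / (2 * s))| ≤ 3 * s⁻¹ * G (2 * s) x := by
  have hsq := G_mul_sq_div_le hs x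
  have hG := G_le_two_mul_G (u := 2 * s) hs (by linarith) (by linarith) x
  have hGs := G_pos hs x
  have hsq_nonneg : 0 ≤ G s x * (x ^ 2 / (2 * s)) := mul_nonneg hGs.le (by positivity)
  have hfactor : G s x * (x ^ 2 / (2 * s ^ 2) - 1 / (2 * s))
      = s⁻¹ * (G s x * (x ^ 2 / (2 * s)) - G s x / 2) := by
    field_simp
  rw [hfactor, abs_mul, abs_of_pos (inv_pos.2 hs), mul_assoc, mul_left_comm]
  gcongr
  exact abs_le.2 ⟨by linarith, by linarith⟩

lemma abs_G_sub_G_le_of_le_two_mul {t t' : ℝ} (ht : 0 < t) (htt' : t ≤ t') (ht' : t' ≤ 2 * t)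
    (x : ℝ) : |G t x - G t' x| ≤ 6 * t⁻¹ * |t - t'| * G (2 * t') x := by
  have hderiv : ∀ s ∈ Set.Icc t t', HasDerivWithinAt (fun s => G s x)
      (G s x * (x ^ 2 / (2 * s ^ 2) - 1 / (2 * s))) (Set.Icc t t') s :=
    fun s hs => (hasDerivAt_G_time x (ht.trans_le hs.1)).hasDerivWithinAt
  have hbound : ∀ s ∈ Set.Icc t t',
      ‖G s x * (x ^ 2 / (2 * s ^ 2) - 1 / (2 * s))‖ ≤ 6 * t⁻¹ * G (2 * t') x := by
    rintro s ⟨hts, hst⟩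
    have hs : 0 < s := ht.trans_le hts
    calc ‖G s x * (x ^ 2 / (2 * s ^ 2) - 1 / (2 * s))‖ ≤ 3 * s⁻¹ * G (2 * s) x :=
          abs_deriv_G_time_le hs x
      _ ≤ 3 * t⁻¹ * (2 * G (2 * t') x) := by
          gcongr
          · exact (G_pos (by positivity) x).le
          · exact G_le_two_mul_G (by positivity) (by linarith) (by linarith) x
      _ = 6 * t⁻¹ * G (2 * t') x := by ring
  have hmvt := (convex_Icc t t').norm_image_sub_le_of_norm_hasDerivWithin_le hderiv hbound
    (Set.left_mem_Icc.2 htt') (Set.right_mem_Icc.2 htt')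
  rw [Real.norm_eq_abs, Real.norm_eq_abs, abs_sub_comm, abs_sub_comm t'] at hmvt
  linarith

lemma abs_G_sub_G_le_of_two_mul_lt {t t' : ℝ} (ht : 0 < t) (ht' : 2 * t < t') (x : ℝ) :
    |G t x - G t' x| ≤ 2 * t⁻¹ * |t - t'| * (G t x + G (2 * t') x) := by
  have hGt := G_pos ht x
  have hGt' := G_pos (t := t') (by linarith) x
  have hG := G_le_two_mul_G (s := t') (u := 2 * t') (by linarith) (by linarith) (by linarith) x
  have hincr : 1 ≤ t⁻¹ * |t - t'| := by
    rw [abs_sub_comm, abs_of_pos (by linarith), inv_mul_eq_div, le_div_iff₀ ht]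
    linarith
  calc |G t x - G t' x| ≤ 2 * 1 * (G t x + G (2 * t') x) := abs_le.2 ⟨by linarith, by linarith⟩
    _ ≤ 2 * (t⁻¹ * |t - t'|) * (G t x + G (2 * t') x) := by gcongr; linarith
    _ = 2 * t⁻¹ * |t - t'| * (G t x + G (2 * t') x) := by ring

/-- Time-increment bound for the heat kernel. -/
theorem heat_kernel_time_increment :
    ∃ C : ℝ, 0 < C ∧ ∀ t t' : ℝ, 0 < t → t ≤ t' → ∀ w : ℝ,
      |G t w - G t' w| ≤ C * t⁻¹ * |t - t'| * (G t w + G (2 * t') w) := by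
  refine ⟨6, by norm_num, fun t t' ht htt' w => ?_⟩
  have hGt := G_pos ht w
  rcases le_or_gt t' (2 * t) with hnear | hfar
  · refine (abs_G_sub_G_le_of_le_two_mul ht htt' hnear w).trans ?_
    gcongr
    linarith
  · refine (abs_G_sub_G_le_of_two_mul_lt ht hfar w).trans ?_
    gcongr
    · exact add_nonneg hGt.le (G_pos (by linarith) w).le
    · norm_num
end

section
/- Let η ∈ (0,1) and let μ be a finite Borel measure on ℝ such that sup_{x ∈ ℝ} ∫_ℝ |x - y|^{-η + ε} μ(dy) < ∞ for every ε > 0. Then for every T > 0, ν₁ ∈ (0, 1/2), and λ > 0 there is a constant C > 0 such that for all x ∈ ℝ and t ∈ (0, T]: ∫_ℝ e^{λ|x-y|} G_t(x-y) 1_{{|x-y| > t^{1/2 - ν₁}}} μ(dy) ≤ C · exp( t/4 - t^{-2ν₁}/32 ). -/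
/-!
On the tail `|z| > t^(1/2 - ν)`, completing the square gives
`e^(λ|z|) G_t(z) ≤ (2πt)^(-1/2) e^(λ²T) e^(-z²/(4t))` with `z²/(4t) > u/4`, where `u = t^(-2ν)`.
The prefactor `t^(-1/2) = u^(1/(4ν))` is absorbed by `e^(-7u/32)` at the cost of a constant, so the
integrand is bounded pointwise by `K e^(-u/32)`; integrating against `μ` only multiplies this by `μ(ℝ)`.
-/

open Real MeasureTheory

namespace Real

theorem rpow_le_div_rpow_mul_exp_mul {a c u : ℝ} (ha : 0 < a) (hc : 0 < c) (hu : 0 ≤ u) :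
    u ^ a ≤ (a / c) ^ a * exp (c * u) := by
  have hlin : c * u / a ≤ exp (c * u / a) := by linarith [add_one_le_exp (c * u / a)]
  calc u ^ a = (a / c) ^ a * (c * u / a) ^ a := by
        rw [← mul_rpow (by positivity) (by positivity)]
        congr 1
        field_simp
    _ ≤ (a / c) ^ a * exp (c * u / a) ^ a := by gcongr
    _ = (a / c) ^ a * exp (c * u) := by
        rw [← exp_mul]
        congr 2
        field_simp

theorem rpow_neg_half_eq_rpow_neg_two_mul_rpow {t ν : ℝ} (ht : 0 < t) (hν : ν ≠ 0) :
    t ^ (-(1 / 2) : ℝ) = (t ^ (-(2 * ν))) ^ (1 / (4 * ν)) := by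
  rw [← rpow_mul ht.le]
  congr 1
  field_simp
  ring

theorem rpow_neg_two_mul_lt_sq_div {t ν z : ℝ} (ht : 0 < t) (hz : t ^ ((1 : ℝ) / 2 - ν) < |z|) :
    t ^ (-(2 * ν)) < z ^ 2 / t := by
  have hsq : t ^ (-(2 * ν)) * t = (t ^ ((1 : ℝ) / 2 - ν)) ^ 2 := by
    rw [← rpow_add_one ht.ne', ← rpow_natCast, ← rpow_mul ht.le]
    norm_num
    ring_nf
  rw [lt_div_iff₀ ht, hsq, ← sq_abs z]
  gcongr

end Real

theorem MeasureTheory.setLIntegral_le_mul_measure_univ {α : Type*} [MeasurableSpace α]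
    {μ : Measure α} {s : Set α} {f : α → ENNReal} {c : ENNReal} (hf : ∀ y ∈ s, f y ≤ c) :
    ∫⁻ y in s, f y ∂μ ≤ c * μ Set.univ :=
  calc ∫⁻ y in s, f y ∂μ ≤ ∫⁻ _ in s, c ∂μ := setLIntegral_mono measurable_const hf
    _ = c * μ s := setLIntegral_const s c
    _ ≤ c * μ Set.univ := by gcongr; exact Set.subset_univ s

theorem exp_mul_abs_mul_G_le {t : ℝ} (ht : 0 < t) (lam z : ℝ) :
    exp (lam * |z|) * G t z ≤ (2 * π * t) ^ (-(1 / 2) : ℝ) * exp (lam ^ 2 * t - z ^ 2 / (4 * t)) := by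
  have hsquare : lam * |z| - z ^ 2 / (2 * t) ≤ lam ^ 2 * t - z ^ 2 / (4 * t) := by
    have hcomplete : lam ^ 2 * t - z ^ 2 / (4 * t) - (lam * |z| - z ^ 2 / (2 * t)) =
        (2 * lam * t - |z|) ^ 2 / (4 * t) := by
      field_simp
      rw [← sq_abs z]
      ring
    linarith [show 0 ≤ (2 * lam * t - |z|) ^ 2 / (4 * t) by positivity]
  calc exp (lam * |z|) * G t z
      = (2 * π * t) ^ (-(1 / 2) : ℝ) * exp (lam * |z| - z ^ 2 / (2 * t)) := by
        rw [G, sub_eq_add_neg, exp_add, neg_div]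
        ring
    _ ≤ _ := by gcongr

theorem exists_exp_mul_abs_mul_G_le_of_rpow_lt_abs (T ν lam : ℝ) (hν : 0 < ν) :
    ∃ K > 0, ∀ t ∈ Set.Ioc (0 : ℝ) T, ∀ z : ℝ, t ^ ((1 : ℝ) / 2 - ν) < |z| →
      exp (lam * |z|) * G t z ≤ K * exp (t / 4 - t ^ (-(2 * ν)) / 32) := by
  set a : ℝ := 1 / (4 * ν)
  have ha : 0 < a := by positivity
  refine ⟨(2 * π) ^ (-(1 / 2) : ℝ) * exp (lam ^ 2 * T) * (a / (7 / 32)) ^ a, by positivity,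
    fun t ⟨ht, htT⟩ z hz => ?_⟩
  set u := t ^ (-(2 * ν))
  have hu : 0 < u := rpow_pos_of_pos ht _
  have hprefactor : (2 * π * t) ^ (-(1 / 2) : ℝ) = (2 * π) ^ (-(1 / 2) : ℝ) * u ^ a := by
    rw [mul_rpow (by positivity) ht.le, rpow_neg_half_eq_rpow_neg_two_mul_rpow ht hν.ne']
  have hexponent : lam ^ 2 * t - z ^ 2 / (4 * t) ≤ lam ^ 2 * T - u / 4 := by
    have htail := rpow_neg_two_mul_lt_sq_div ht hz
    have hquarter : z ^ 2 / (4 * t) = z ^ 2 / t / 4 := by field_simp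
    have hlam : lam ^ 2 * t ≤ lam ^ 2 * T := by gcongr
    linarith
  calc exp (lam * |z|) * G t z
      ≤ (2 * π) ^ (-(1 / 2) : ℝ) * u ^ a * exp (lam ^ 2 * T - u / 4) := by
        rw [← hprefactor]
        exact (exp_mul_abs_mul_G_le ht lam z).trans (by gcongr)
    _ ≤ (2 * π) ^ (-(1 / 2) : ℝ) * ((a / (7 / 32)) ^ a * exp (7 / 32 * u)) *
          exp (lam ^ 2 * T - u / 4) := by
        gcongr
        exact rpow_le_div_rpow_mul_exp_mul ha (by norm_num) hu.le
    _ = (2 * π) ^ (-(1 / 2) : ℝ) * exp (lam ^ 2 * T) * (a / (7 / 32)) ^ a * exp (-(u / 32)) := by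
        have hexp : exp (7 / 32 * u) * exp (lam ^ 2 * T - u / 4) =
            exp (lam ^ 2 * T) * exp (-(u / 32)) := by
          rw [← exp_add, ← exp_add]
          ring_nf
        linear_combination ((2 * π) ^ (-(1 / 2) : ℝ) * (a / (7 / 32)) ^ a) * hexp
    _ ≤ _ := by gcongr; linarith

theorem heat_kernel_tail_fractal_bound_general
    (μ : Measure ℝ) [IsFiniteMeasure μ]
    (T ν₁ lam : ℝ) (hν : ν₁ ∈ Set.Ioo (0 : ℝ) (1/2)) :
    ∃ C : ℝ, 0 < C ∧ ∀ x : ℝ, ∀ t ∈ Set.Ioc (0 : ℝ) T,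
      (∫⁻ y in {y : ℝ | t ^ ((1 : ℝ)/2 - ν₁) < |x - y|},
          ENNReal.ofReal (Real.exp (lam * |x - y|) * G t (x - y)) ∂μ) ≤
        ENNReal.ofReal (C * Real.exp (t / 4 - t ^ (-(2 * ν₁)) / 32)) := by
  obtain ⟨K, hK, hpointwise⟩ := exists_exp_mul_abs_mul_G_le_of_rpow_lt_abs T ν₁ lam hν.1
  refine ⟨K * (μ.real Set.univ + 1), by positivity, fun x t ht => ?_⟩
  set E := exp (t / 4 - t ^ (-(2 * ν₁)) / 32)
  calc _ ≤ ENNReal.ofReal (K * E) * μ Set.univ :=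
        setLIntegral_le_mul_measure_univ fun y hy =>
          ENNReal.ofReal_le_ofReal (hpointwise t ht (x - y) hy)
    _ ≤ ENNReal.ofReal (K * E) * ENNReal.ofReal (μ.real Set.univ + 1) := by
        rw [← ofReal_measureReal (measure_ne_top μ _)]
        gcongr
        linarith
    _ = _ := by
        rw [← ENNReal.ofReal_mul (by positivity)]
        ring_nf

/-- Lemma: Gaussian tail integral against a measure with bounded (η-ε)-potentials. -/
theorem heat_kernel_tail_fractal_bound (η : ℝ) (hη : η ∈ Set.Ioo (0 : ℝ) 1)
    (μ : Measure ℝ) [IsFiniteMeasure μ]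
    (hpot : ∀ ε > 0, ∃ B : ℝ, ∀ x : ℝ,
      ∫⁻ y, ENNReal.ofReal (|x - y| ^ (-η + ε)) ∂μ ≤ ENNReal.ofReal B)
    (T ν₁ lam : ℝ) (hT : 0 < T) (hν : ν₁ ∈ Set.Ioo (0 : ℝ) (1/2)) (hlam : 0 < lam) :
    ∃ C : ℝ, 0 < C ∧ ∀ x : ℝ, ∀ t ∈ Set.Ioc (0 : ℝ) T,
      (∫⁻ y in {y : ℝ | t ^ ((1 : ℝ)/2 - ν₁) < |x - y|},
          ENNReal.ofReal (Real.exp (lam * |x - y|) * G t (x - y)) ∂μ) ≤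
        ENNReal.ofReal (C * Real.exp (t / 4 - t ^ (-(2 * ν₁)) / 32)) :=
  heat_kernel_tail_fractal_bound_general μ T ν₁ lam hν
end

section
/- Let η ∈ (0,1), α = 1/(η+1), and γ > 1 - η/(2(η+1)). Let (a_n) be any sequence with a_n ∈ (0,1], let β ∈ [0, η/(η+1)], d ∈ (0,1], and set γ₁ = γ + η/2 and γ̃ = min(η/(2(1-γ)), 1+η) (so that γ̃ - 1 ≥ η when the minimum is attained at 1+η). Then a_n^{βγ} · (max(a_n^α, d))^{γ₁ - 1} ≤ a_n^β + (max(d, a_n^α))^{η}. -/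
/-!
Write `m = max (a ^ α) d`, `x = a ^ β` and `y = m ^ η`, both in `[0, 1]`. With
`e = γ + η / 2 - 1` the left-hand side is `x ^ γ * y ^ (e / η)`, and the lower bound on `γ` is
exactly what makes the total exponent `γ + e / η` at least `1`. A product of powers of numbers in
`[0, 1]` with total exponent at least `1` is at most the larger base, hence at most `x + y`.
-/

open Real

theorem Real.rpow_mul_rpow_le_max {x y p q : ℝ} (hx₀ : 0 ≤ x) (hx₁ : x ≤ 1) (hy₀ : 0 ≤ y)
    (hy₁ : y ≤ 1) (hp : 0 ≤ p) (hq : 0 ≤ q) (hpq : 1 ≤ p + q) :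
    x ^ p * y ^ q ≤ max x y := by
  have hM₀ : 0 ≤ max x y := le_max_of_le_left hx₀
  calc x ^ p * y ^ q ≤ max x y ^ p * max x y ^ q := by
        gcongr
        · exact le_max_left x y
        · exact le_max_right x y
    _ = max x y ^ (p + q) := (rpow_add' hM₀ (by linarith)).symm
    _ ≤ max x y ^ (1 : ℝ) :=
        rpow_le_rpow_of_exponent_ge' hM₀ (max_le hx₁ hy₁) zero_le_one hpq
    _ = max x y := rpow_one _

theorem exponent_bounds_of_one_sub_div_lt {η γ : ℝ} (hη : 0 < η) (hγ : 1 - η / (2 * (η + 1)) < γ) :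
    0 ≤ γ ∧ 0 ≤ (γ + η / 2 - 1) / η ∧ 1 ≤ γ + (γ + η / 2 - 1) / η := by
  have hγ' : (1 - γ) * (2 * (η + 1)) < η := by
    rw [sub_lt_comm, lt_div_iff₀ (by positivity)] at hγ
    exact hγ
  refine ⟨by nlinarith, div_nonneg (by nlinarith) hη.le, ?_⟩
  rw [← sub_le_iff_le_add', le_div_iff₀ hη]
  nlinarith

theorem key_arith_inequality_general (η α γ : ℝ) (hη : η ∈ Set.Ioo (0 : ℝ) 1)
    (hα : α = 1 / (η + 1))
    (hγ : 1 - η / (2 * (η + 1)) < γ)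
    (a : ℝ) (ha : a ∈ Set.Ioc (0 : ℝ) 1)
    (β : ℝ) (hβ : β ∈ Set.Icc (0 : ℝ) (η / (η + 1)))
    (d : ℝ) (hd : d ∈ Set.Ioc (0 : ℝ) 1) :
    a ^ (β * γ) * (max (a ^ α) d) ^ (γ + η / 2 - 1) ≤ a ^ β + (max d (a ^ α)) ^ η := by
  obtain ⟨hγ₀, he₀, hsum⟩ := exponent_bounds_of_one_sub_div_lt hη.1 hγ
  set m := max (a ^ α) d
  have hm₀ : 0 ≤ m := le_max_of_le_left (rpow_nonneg ha.1.le α)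
  have hm₁ : m ≤ 1 := max_le (rpow_le_one ha.1.le ha.2 (by rw [hα]; have := hη.1; positivity)) hd.2
  have hx₀ : 0 ≤ a ^ β := rpow_nonneg ha.1.le β
  have hy₀ : 0 ≤ m ^ η := rpow_nonneg hm₀ η
  rw [max_comm d]
  calc a ^ (β * γ) * m ^ (γ + η / 2 - 1)
        = (a ^ β) ^ γ * (m ^ η) ^ ((γ + η / 2 - 1) / η) := by
          rw [← rpow_mul ha.1.le, ← rpow_mul hm₀, mul_div_cancel₀ _ hη.1.ne']
    _ ≤ max (a ^ β) (m ^ η) :=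
        rpow_mul_rpow_le_max hx₀ (rpow_le_one ha.1.le ha.2 hβ.1) hy₀
          (rpow_le_one hm₀ hm₁ hη.1.le) hγ₀ he₀ hsum
    _ ≤ a ^ β + m ^ η := max_le_add_of_nonneg hx₀ hy₀

/-- Lemma 5.15: a^{βγ}(a^α ∨ d)^{γ-1+η/2} ≤ a^β + (d ∨ a^α)^η. -/
theorem key_arith_inequality (η α γ : ℝ) (hη : η ∈ Set.Ioo (0 : ℝ) 1)
    (hα : α = 1 / (η + 1))
    (hγ : 1 - η / (2 * (η + 1)) < γ) (hγ1 : γ ≤ 1)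
    (a : ℝ) (ha : a ∈ Set.Ioc (0 : ℝ) 1)
    (β : ℝ) (hβ : β ∈ Set.Icc (0 : ℝ) (η / (η + 1)))
    (d : ℝ) (hd : d ∈ Set.Ioc (0 : ℝ) 1) :
    a ^ (β * γ) * (max (a ^ α) d) ^ (γ + η / 2 - 1) ≤ a ^ β + (max d (a ^ α)) ^ η :=
  key_arith_inequality_general η α γ hη hα hγ a ha β hβ d hd
end
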